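/- Let (X, Σ, μ) be a σ-finite non-atomic measure space, and let Φ₁, Φ₂, Φ₃ be Young functions with Φ₁(xy) ≤ Φ₂(x) + Φ₃(y) for all x, y ≥ 0. Then the multiplication operator M_u: L^{Φ₁}(Σ) → L^{Φ₂}(Σ) is bounded if and only if M_u = 0 (i.e., u = 0 μ-a.e.). -/

import Mathlib

open MeasureTheory Filter Topology

/-- A Young function: continuous, convex, even, vanishing exactly at 0,
with superlinear growth at infinity. -/
structure YoungFunction where
  toFun : ℝ → ℝ
  continuous' : Continuous toFun
  convexOn' : ConvexOn ℝ Set.univ toFun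
  even' : ∀ x, toFun (-x) = toFun x
  zero_iff' : ∀ x, toFun x = 0 ↔ x = 0
  tendsto_atTop' : Tendsto (fun x => toFun x / x) atTop atTop

instance : CoeFun YoungFunction fun _ => ℝ → ℝ := ⟨YoungFunction.toFun⟩

variable {X : Type*} [MeasurableSpace X]

/-- Membership in the Orlicz space `L^Φ(μ)`. -/
def MemOrlicz (Φ : YoungFunction) (μ : Measure X) (f : X → ℝ) : Prop :=
  AEStronglyMeasurable f μ ∧ ∃ k > 0, Integrable (fun x => Φ (k * f x)) μ

/-- The Luxemburg norm on the Orlicz space `L^Φ(μ)`. -/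
noncomputable def luxNorm (Φ : YoungFunction) (μ : Measure X) (f : X → ℝ) : ℝ :=
  sInf {k : ℝ | 0 < k ∧ ∫ x, Φ (f x / k) ∂μ ≤ 1}

/-- The generalized (right) inverse of a Young function on `[0,∞)`. -/
noncomputable def yInv (Φ : YoungFunction) (y : ℝ) : ℝ :=
  sSup {x : ℝ | 0 ≤ x ∧ Φ x ≤ y}

/-- `Φ` satisfies the `Δ₂` condition globally. -/
def YoungDeltaTwo (Φ : YoungFunction) : Prop :=
  ∃ k > 0, ∀ x : ℝ, 0 ≤ x → Φ (2 * x) ≤ k * Φ x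

/-- `Φ` satisfies the `Δ'` condition globally, with constant `c`. -/
def YoungDeltaPrime (Φ : YoungFunction) (c : ℝ) : Prop :=
  0 < c ∧ ∀ x y : ℝ, 0 ≤ x → 0 ≤ y → Φ (x * y) ≤ c * Φ x * Φ y

/-- `Φ` satisfies the `∇'` condition globally, with constant `b`. -/
def YoungNablaPrime (Φ : YoungFunction) (b : ℝ) : Prop :=
  0 < b ∧ ∀ x y : ℝ, 0 ≤ x → 0 ≤ y → Φ x * Φ y ≤ Φ (b * x * y)

/-- `Φ ≺ Ψ` : `Φ` is weaker than `Ψ`. -/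
def YoungWeaker (Φ Ψ : YoungFunction) : Prop :=
  ∃ a > 0, ∃ x₀ : ℝ, 0 ≤ x₀ ∧ ∀ x : ℝ, x₀ ≤ x → Φ x ≤ Ψ (a * x)

/-- `A` is an atom of the measure `μ`. -/
def IsAtomSet (μ : Measure X) (A : Set X) : Prop :=
  MeasurableSet A ∧ 0 < μ A ∧
    ∀ B : Set X, MeasurableSet B → B ⊆ A → μ B = 0 ∨ μ B = μ A

/-- `μ` is non-atomic on the set `S`. -/
def NonAtomicOn (μ : Measure X) (S : Set X) : Prop :=
  ∀ A : Set X, A ⊆ S → ¬ IsAtomSet μ A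

/-- A linear map between Orlicz spaces (given as a map on functions) is bounded. -/
def OrliczBounded (Φ₁ Φ₂ : YoungFunction) (μ : Measure X)
    (Tmap : (X → ℝ) → (X → ℝ)) : Prop :=
  ∃ C > 0, ∀ f : X → ℝ, MemOrlicz Φ₁ μ f →
    MemOrlicz Φ₂ μ (Tmap f) ∧ luxNorm Φ₂ μ (Tmap f) ≤ C * luxNorm Φ₁ μ f

/-- The atomic decomposition of a σ-finite measure space: `X = (⋃ n, A n) ∪ B`
with the `A n` pairwise disjoint atoms of finite measure and `B` non-atomic. -/
def AtomicDecomposition (μ : Measure X) (A : ℕ → Set X) (B : Set X) : Prop :=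
  (∀ n, IsAtomSet μ (A n)) ∧ (∀ n, μ (A n) < ⊤) ∧
    Pairwise (Function.onFun Disjoint A) ∧ (∀ n, Disjoint (A n) B) ∧
    MeasurableSet B ∧ NonAtomicOn μ B ∧ (⋃ n, A n) ∪ B = Set.univ

/-!
If `u` does not vanish a.e., then `a ≤ |u| ≤ b` on a set of positive measure, and by
non-atomicity this set contains sets `E` of arbitrarily small positive measure. Test `M_u` on
`𝟙_E`, choosing `s` with `Φ₂(s) μ(E) = 1/2`. If `Φ₃(y) μ(E) ≤ 1/2`, the inequality
`Φ₁(s y) ≤ Φ₂(s) + Φ₃(y)` gives `‖𝟙_E‖_{Φ₁} ≤ 1/(s y)`, while `Φ₂(3s) ≥ 3 Φ₂(s)` (convexity)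
gives `‖u 𝟙_E‖_{Φ₂} ≥ a/(3s)`. So a bound `C` for `M_u` forces `a y ≤ 3 C`; but `y` can be taken
arbitrarily large by shrinking `μ(E)`.
-/

namespace YoungFunction

variable (Φ : YoungFunction)

lemma map_zero : Φ 0 = 0 := (Φ.zero_iff' 0).mpr rfl

lemma map_abs (x : ℝ) : Φ |x| = Φ x := by
  rcases abs_choice x with h | h <;> rw [h]
  exact Φ.even' x

lemma map_le_map_of_abs_le {x y : ℝ} (h : |x| ≤ |y|) : Φ x ≤ Φ y := by
  have hx : x ∈ segment ℝ (-|y|) |y| := by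
    rw [segment_eq_Icc (by simp)]
    exact abs_le.1 h
  calc Φ x ≤ max (Φ (-|y|)) (Φ |y|) :=
        Φ.convexOn'.le_on_segment (Set.mem_univ _) (Set.mem_univ _) hx
    _ = Φ y := by rw [Φ.even', max_self, Φ.map_abs]

lemma map_div_le_map_div_of_abs_le {x y : ℝ} (h : |x| ≤ |y|) (k : ℝ) :
    Φ (x / k) ≤ Φ (y / k) :=
  Φ.map_le_map_of_abs_le <| by
    rw [abs_div, abs_div]
    exact div_le_div_of_nonneg_right h (abs_nonneg k)

lemma nonneg (x : ℝ) : 0 ≤ Φ x := by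
  simpa [Φ.map_zero] using Φ.map_le_map_of_abs_le (x := 0) (y := x) (by simp)

lemma pos {x : ℝ} (hx : x ≠ 0) : 0 < Φ x :=
  (Φ.nonneg x).lt_of_ne' fun h => hx ((Φ.zero_iff' x).1 h)

lemma mul_map_le_map_mul {a : ℝ} (ha : 1 ≤ a) (x : ℝ) : a * Φ x ≤ Φ (a * x) := by
  have ha₀ : 0 < a := one_pos.trans_le ha
  have h := Φ.convexOn'.2 (Set.mem_univ (a * x)) (Set.mem_univ 0)
    (inv_nonneg.2 ha₀.le) (sub_nonneg.2 (inv_le_one_of_one_le₀ ha)) (add_sub_cancel _ _)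
  simp only [smul_eq_mul, mul_zero, add_zero, Φ.map_zero, inv_mul_cancel_left₀ ha₀.ne'] at h
  rwa [← le_div_iff₀' ha₀, div_eq_inv_mul]

lemma tendsto_atTop : Tendsto Φ.toFun atTop atTop :=
  (Φ.tendsto_atTop'.atTop_mul_atTop₀ tendsto_id).congr'
    ((eventually_ne_atTop 0).mono fun _ hx => div_mul_cancel₀ _ hx)

lemma exists_pos_map_eq {v : ℝ} (hv : 0 < v) : ∃ s > 0, Φ s = v := by
  obtain ⟨s, hs, hsv⟩ := intermediate_value_Ici Φ.continuous'.continuousOn Φ.tendsto_atTop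
    (show v ∈ Set.Ici (Φ 0) by rw [Φ.map_zero]; exact hv.le)
  refine ⟨s, (Set.mem_Ici.1 hs).lt_of_ne ?_, hsv⟩
  rintro rfl
  exact hv.ne' (hsv.symm.trans Φ.map_zero)

end YoungFunction

open scoped ENNReal

section NonAtomic

variable {μ : Measure X}

lemma NonAtomicOn.exists_subset_measure_pos_lt (hna : NonAtomicOn μ Set.univ) {S : Set X}
    (hS : MeasurableSet S) (h0 : 0 < μ S) :
    ∃ B ⊆ S, MeasurableSet B ∧ 0 < μ B ∧ μ B < μ S := by
  have := hna S (Set.subset_univ S)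
  simp only [IsAtomSet, hS, h0, true_and, not_forall, not_or] at this
  obtain ⟨B, hB, hBS, hB0, hBS'⟩ := this
  exact ⟨B, hBS, hB, pos_iff_ne_zero.2 hB0, (measure_mono hBS).lt_of_ne hBS'⟩

/-- For `μ S = ∞` the bound by `μ S / 2` is void, but the subset is still of finite measure. -/
lemma NonAtomicOn.exists_subset_measure_pos_le_half (hna : NonAtomicOn μ Set.univ) {S : Set X}
    (hS : MeasurableSet S) (h0 : 0 < μ S) :
    ∃ E ⊆ S, MeasurableSet E ∧ 0 < μ E ∧ μ E < ∞ ∧ μ E ≤ μ S / 2 := by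
  obtain ⟨B, hBS, hB, hB0, hBlt⟩ := hna.exists_subset_measure_pos_lt hS h0
  have hBfin : μ B < ∞ := hBlt.trans_le le_top
  rcases eq_or_ne (μ S) ∞ with hSinf | hSfin
  · exact ⟨B, hBS, hB, hB0, hBfin, by simp [hSinf, ENNReal.top_div]⟩
  rcases le_or_gt (μ B) (μ S / 2) with hle | hgt
  · exact ⟨B, hBS, hB, hB0, hBfin, hle⟩
  have hdiff : μ (S \ B) = μ S - μ B := measure_sdiff hBS hB.nullMeasurableSet hBfin.ne
  refine ⟨S \ B, Set.sdiff_subset, hS.diff hB, ?_, ?_, ?_⟩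
  · rw [hdiff]; exact tsub_pos_of_lt hBlt
  · rw [hdiff]; exact tsub_le_self.trans_lt hSfin.lt_top
  · rw [hdiff, tsub_le_iff_right]
    calc μ S = μ S / 2 + μ S / 2 := (ENNReal.add_halves _).symm
      _ ≤ μ S / 2 + μ B := by gcongr

lemma NonAtomicOn.exists_subset_measure_pos_le (hna : NonAtomicOn μ Set.univ) {S : Set X}
    (hS : MeasurableSet S) (h0 : 0 < μ S) {δ : ℝ≥0∞} (hδ : 0 < δ) :
    ∃ E ⊆ S, MeasurableSet E ∧ 0 < μ E ∧ μ E ≤ δ := by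
  obtain ⟨E₀, hE₀S, hE₀, hE₀pos, hE₀fin, -⟩ := hna.exists_subset_measure_pos_le_half hS h0
  have halve : ∀ n : ℕ, ∃ E ⊆ S, MeasurableSet E ∧ 0 < μ E ∧ μ E ≤ μ E₀ * 2⁻¹ ^ n := by
    intro n
    induction n with
    | zero => exact ⟨E₀, hE₀S, hE₀, hE₀pos, by simp⟩
    | succ n ih =>
      obtain ⟨E, hES, hE, hEpos, hEle⟩ := ih
      obtain ⟨F, hFE, hF, hFpos, -, hFle⟩ := hna.exists_subset_measure_pos_le_half hE hEpos
      refine ⟨F, hFE.trans hES, hF, hFpos, ?_⟩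
      calc μ F ≤ μ E / 2 := hFle
        _ ≤ μ E₀ * 2⁻¹ ^ n / 2 := by gcongr
        _ = μ E₀ * 2⁻¹ ^ (n + 1) := by rw [pow_succ, ← mul_assoc, div_eq_mul_inv]
  obtain ⟨n, hn⟩ := ENNReal.exists_inv_two_pow_lt (ENNReal.div_ne_zero.2 ⟨hδ.ne', hE₀fin.ne⟩)
  obtain ⟨E, hES, hE, hEpos, hEle⟩ := halve n
  refine ⟨E, hES, hE, hEpos, hEle.trans ?_⟩
  calc μ E₀ * 2⁻¹ ^ n ≤ μ E₀ * (δ / μ E₀) := by gcongr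
    _ ≤ δ := ENNReal.mul_div_le

end NonAtomic

section Orlicz

variable {Φ : YoungFunction} {μ : Measure X}

lemma memOrlicz_zero : MemOrlicz Φ μ 0 :=
  ⟨aestronglyMeasurable_const, 1, one_pos, by simp [Φ.map_zero]⟩

lemma MemOrlicz.ae_eq {f g : X → ℝ} (hf : MemOrlicz Φ μ f) (h : f =ᵐ[μ] g) :
    MemOrlicz Φ μ g := by
  obtain ⟨hmeas, k, hk, hint⟩ := hf
  exact ⟨hmeas.congr h, k, hk, hint.congr (h.mono fun x hx => by simp only [hx])⟩

lemma luxNorm_nonneg (f : X → ℝ) : 0 ≤ luxNorm Φ μ f :=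
  Real.sInf_nonneg fun _ hk => hk.1.le

lemma luxNorm_congr_ae {f g : X → ℝ} (h : f =ᵐ[μ] g) : luxNorm Φ μ f = luxNorm Φ μ g := by
  have hint : ∀ k : ℝ, ∫ x, Φ (f x / k) ∂μ = ∫ x, Φ (g x / k) ∂μ := fun k =>
    integral_congr_ae (h.mono fun x hx => by simp only [hx])
  simp only [luxNorm, hint]

lemma luxNorm_zero : luxNorm Φ μ 0 = 0 := by
  simp only [luxNorm, Pi.zero_apply, zero_div, Φ.map_zero, integral_zero, zero_le_one, and_true]
  exact csInf_Ioi

lemma luxNorm_le {f : X → ℝ} {k : ℝ} (hk : 0 < k) (h : ∫ x, Φ (f x / k) ∂μ ≤ 1) :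
    luxNorm Φ μ f ≤ k :=
  csInf_le ⟨0, fun _ hj => hj.1.le⟩ ⟨hk, h⟩

variable {E : Set X} {g : X → ℝ} {a b k : ℝ}

lemma memOrlicz_indicator_one (hE : MeasurableSet E) (hμE : μ E ≠ ∞) :
    MemOrlicz Φ μ (E.indicator 1) := by
  refine ⟨(measurable_const.indicator hE).aestronglyMeasurable, 1, one_pos, ?_⟩
  have h : (fun x => Φ (1 * E.indicator 1 x)) = E.indicator fun _ => Φ 1 := by
    ext x
    by_cases hx : x ∈ E <;> simp [hx, Φ.map_zero]
  rw [h]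
  exact (integrable_indicator_iff hE).2 (integrableOn_const hμE)

lemma integral_comp_indicator_div (hE : MeasurableSet E) (g : X → ℝ) (k : ℝ) :
    ∫ x, Φ (E.indicator g x / k) ∂μ = ∫ x in E, Φ (g x / k) ∂μ := by
  rw [← integral_indicator hE]
  congr 1 with x
  by_cases hx : x ∈ E <;> simp [hx, Φ.map_zero]

lemma integral_comp_indicator_div_le (hE : MeasurableSet E) (hμE : μ E ≠ ∞)
    (hb : ∀ x ∈ E, |g x| ≤ b) (k : ℝ) :
    ∫ x, Φ (E.indicator g x / k) ∂μ ≤ Φ (b / k) * μ.real E := by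
  rw [integral_comp_indicator_div hE]
  refine (Real.le_norm_self _).trans
    (norm_setIntegral_le_of_norm_le_const hμE.lt_top fun x hx => ?_)
  rw [Real.norm_of_nonneg (Φ.nonneg _)]
  exact Φ.map_div_le_map_div_of_abs_le ((hb x hx).trans (le_abs_self b)) k

/-- The upper bound `b` is what makes `Φ (g / k)` integrable on `E`; for an unbounded `g` the
Bochner integral could take its junk value `0`. -/
lemma mul_measureReal_le_integral_comp_indicator_div (hE : MeasurableSet E) (hμE : μ E ≠ ∞)
    (hg : Measurable g) (hab : ∀ x ∈ E, |g x| ∈ Set.Icc a b) (ha : 0 ≤ a) :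
    Φ (a / k) * μ.real E ≤ ∫ x, Φ (E.indicator g x / k) ∂μ := by
  rw [integral_comp_indicator_div hE]
  refine setIntegral_ge_of_const_le_real hE hμE (fun x hx => ?_) ?_
  · exact Φ.map_div_le_map_div_of_abs_le ((abs_of_nonneg ha).trans_le (hab x hx).1) k
  · refine Measure.integrableOn_of_bounded hμE
      (Φ.continuous'.measurable.comp (hg.div_const k)).aestronglyMeasurable (M := Φ (b / k))
      ((ae_restrict_iff' hE).2 (ae_of_all _ fun x hx => ?_))
    rw [Real.norm_of_nonneg (Φ.nonneg _)]
    exact Φ.map_div_le_map_div_of_abs_le ((hab x hx).2.trans (le_abs_self b)) k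

lemma le_luxNorm_indicator (hE : MeasurableSet E) (hμE : μ E ≠ ∞) (hg : Measurable g)
    (hab : ∀ x ∈ E, |g x| ∈ Set.Icc a b) (ha : 0 ≤ a) {c : ℝ} (hc : 0 < c)
    (h : 1 < Φ (a / c) * μ.real E) :
    c ≤ luxNorm Φ μ (E.indicator g) := by
  have hlim : Tendsto (fun k => Φ (b / k) * μ.real E) atTop (𝓝 0) := by
    simpa [Φ.map_zero] using ((Φ.continuous'.tendsto 0).comp
      (tendsto_const_nhds.div_atTop tendsto_id)).mul_const (μ.real E)
  obtain ⟨k₀, hk₀1, hk₀⟩ :=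
    ((hlim.eventually (ge_mem_nhds one_pos)).and (eventually_gt_atTop 0)).exists
  refine le_csInf ⟨k₀, hk₀,
    (integral_comp_indicator_div_le hE hμE (fun x hx => (hab x hx).2) k₀).trans hk₀1⟩ ?_
  rintro k ⟨hk, hk1⟩
  by_contra! hkc
  have hmono : Φ (a / c) ≤ Φ (a / k) := Φ.map_le_map_of_abs_le <| by
    rw [abs_div, abs_div, abs_of_pos hc, abs_of_pos hk]
    exact div_le_div_of_nonneg_left (abs_nonneg a) hk hkc.le
  refine lt_irrefl (1 : ℝ) ?_
  calc 1 < Φ (a / c) * μ.real E := h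
    _ ≤ Φ (a / k) * μ.real E := by gcongr
    _ ≤ ∫ x, Φ (E.indicator g x / k) ∂μ :=
      mul_measureReal_le_integral_comp_indicator_div hE hμE hg hab ha
    _ ≤ 1 := hk1

end Orlicz

lemma exists_measure_abs_mem_Icc_pos {μ : Measure X} {u : X → ℝ} (h : ¬ u =ᵐ[μ] 0) :
    ∃ a > 0, ∃ b, 0 < μ {x | |u x| ∈ Set.Icc a b} := by
  by_contra! hall
  apply h
  have hae : ∀ᵐ x ∂μ, ∀ n : ℕ, |u x| ∉ Set.Icc (1 / (n + 1 : ℝ)) (n + 1) :=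
    ae_all_iff.2 fun n =>
      measure_eq_zero_iff_ae_notMem.1 (nonpos_iff_eq_zero.1 (hall _ (by positivity) _))
  filter_upwards [hae] with x hx
  by_contra hx0
  have hpos : 0 < |u x| := abs_pos.2 hx0
  obtain ⟨n, hn⟩ := exists_nat_ge (max |u x|⁻¹ |u x|)
  refine hx n ⟨?_, by linarith [le_max_right |u x|⁻¹ |u x|]⟩
  rw [one_div, inv_le_comm₀ (by positivity) hpos]
  linarith [le_max_left |u x|⁻¹ |u x|]

section Multiplication

variable {μ : Measure X} {Φ₁ Φ₂ Φ₃ : YoungFunction} {u : X → ℝ}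

lemma mul_le_of_luxNorm_mul_le
    (hΦ : ∀ x y : ℝ, 0 ≤ x → 0 ≤ y → Φ₁ (x * y) ≤ Φ₂ x + Φ₃ y) (hu : Measurable u)
    {C : ℝ} (hC : 0 ≤ C)
    (hbd : ∀ f, MemOrlicz Φ₁ μ f → luxNorm Φ₂ μ (fun x => u x * f x) ≤ C * luxNorm Φ₁ μ f)
    {E : Set X} (hE : MeasurableSet E) (hμE : μ E ≠ ∞) (hE₀ : 0 < μ.real E)
    {a b : ℝ} (ha : 0 < a) (hab : ∀ x ∈ E, |u x| ∈ Set.Icc a b)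
    {y : ℝ} (hy : 0 < y) (hΦ₃y : 2 * Φ₃ y * μ.real E ≤ 1) :
    a * y ≤ 3 * C := by
  set m := μ.real E
  obtain ⟨s, hs, hΦ₂s⟩ := Φ₂.exists_pos_map_eq (v := 1 / (2 * m)) (by positivity)
  have hsm : Φ₂ s * m = 1 / 2 := by rw [hΦ₂s]; field_simp
  have hf : luxNorm Φ₁ μ (E.indicator 1) ≤ 1 / (s * y) := by
    refine luxNorm_le (by positivity) ((integral_comp_indicator_div_le hE hμE (b := 1)
      (fun x _ => by simp) _).trans ?_)
    calc Φ₁ (1 / (1 / (s * y))) * m ≤ (Φ₂ s + Φ₃ y) * m := by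
          rw [one_div_one_div]; gcongr; exact hΦ s y hs.le hy.le
      _ ≤ 1 := by rw [add_mul]; linarith
  have huf : a / (3 * s) ≤ luxNorm Φ₂ μ (E.indicator u) := by
    refine le_luxNorm_indicator hE hμE hu hab ha.le (by positivity) ?_
    calc 1 < 3 * Φ₂ s * m := by rw [mul_assoc, hsm]; norm_num
      _ ≤ Φ₂ (a / (a / (3 * s))) * m := by
          rw [div_div_cancel₀ ha.ne']; gcongr; exact Φ₂.mul_map_le_map_mul (by norm_num) s
  have hmul : (fun x => u x * E.indicator 1 x) = E.indicator u := by
    ext x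
    by_cases hx : x ∈ E <;> simp [hx]
  have hbdE := hbd _ (memOrlicz_indicator_one hE hμE)
  rw [hmul] at hbdE
  have hcomp : a / (3 * s) ≤ C / (s * y) := by
    calc a / (3 * s) ≤ C * (1 / (s * y)) := huf.trans (hbdE.trans (by gcongr))
      _ = C / (s * y) := mul_one_div C _
  rw [div_le_div_iff₀ (by positivity) (by positivity)] at hcomp
  nlinarith

lemma ae_eq_zero_of_orliczBounded_mul (hna : NonAtomicOn μ Set.univ)
    (hΦ : ∀ x y : ℝ, 0 ≤ x → 0 ≤ y → Φ₁ (x * y) ≤ Φ₂ x + Φ₃ y) (hu : Measurable u)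
    (hbd : OrliczBounded Φ₁ Φ₂ μ (fun f x => u x * f x)) :
    u =ᵐ[μ] 0 := by
  obtain ⟨C, hC, hbd⟩ := hbd
  by_contra hu₀
  obtain ⟨a, ha, b, hT⟩ := exists_measure_abs_mem_Icc_pos hu₀
  set y := 3 * C / a + 1
  have hy : 0 < y := by positivity
  have hΦ₃y₀ : 0 < Φ₃ y := Φ₃.pos hy.ne'
  obtain ⟨E, hET, hE, hE₀, hEδ⟩ :=
    hna.exists_subset_measure_pos_le (hu.abs measurableSet_Icc) hT
      (δ := ENNReal.ofReal (1 / (2 * Φ₃ y))) (by simpa using hΦ₃y₀)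
  have hμE : μ E ≠ ∞ := (hEδ.trans_lt ENNReal.ofReal_lt_top).ne
  have hΦ₃y : 2 * Φ₃ y * μ.real E ≤ 1 := by
    rw [← le_div_iff₀' (by positivity)]
    exact ENNReal.toReal_le_of_le_ofReal (by positivity) hEδ
  have hay_le := mul_le_of_luxNorm_mul_le hΦ hu hC.le (fun f hf => (hbd f hf).2) hE hμE
    (ENNReal.toReal_pos hE₀.ne' hμE) ha (fun x hx => hET hx) hy hΦ₃y
  have hay : a * y = 3 * C + a := by simp only [y]; field_simp
  linarith

end Multiplication

lemma orliczBounded_mul_of_ae_eq_zero {μ : Measure X} {Φ₁ Φ₂ : YoungFunction} {u : X → ℝ}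
    (hu : u =ᵐ[μ] 0) :
    OrliczBounded Φ₁ Φ₂ μ (fun f x => u x * f x) := by
  refine ⟨1, one_pos, fun f _ => ?_⟩
  have huf : (fun x => u x * f x) =ᵐ[μ] 0 := hu.mono fun x hx => by simp [hx]
  rw [luxNorm_congr_ae huf, luxNorm_zero, one_mul]
  exact ⟨memOrlicz_zero.ae_eq huf.symm, luxNorm_nonneg f⟩

theorem multiplication_bounded_iff_zero_of_nonatomic_general
    {X : Type*} [MeasurableSpace X] (μ : Measure X)
    (hna : NonAtomicOn μ Set.univ)
    (Φ₁ Φ₂ Φ₃ : YoungFunction)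
    (hΦ : ∀ x y : ℝ, 0 ≤ x → 0 ≤ y → Φ₁ (x * y) ≤ Φ₂ x + Φ₃ y)
    (u : X → ℝ) (hu : Measurable u) :
    OrliczBounded Φ₁ Φ₂ μ (fun f x => u x * f x) ↔ u =ᵐ[μ] (0 : X → ℝ) :=
  ⟨ae_eq_zero_of_orliczBounded_mul hna hΦ hu, orliczBounded_mul_of_ae_eq_zero⟩

/-- over a non-atomic measure space, `M_u` is bounded iff `u = 0` a.e. -/
theorem multiplication_bounded_iff_zero_of_nonatomic
    {X : Type*} [MeasurableSpace X] (μ : Measure X) [SigmaFinite μ]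
    (hna : NonAtomicOn μ Set.univ)
    (Φ₁ Φ₂ Φ₃ : YoungFunction)
    (hΦ : ∀ x y : ℝ, 0 ≤ x → 0 ≤ y → Φ₁ (x * y) ≤ Φ₂ x + Φ₃ y)
    (u : X → ℝ) (hu : Measurable u) :
    OrliczBounded Φ₁ Φ₂ μ (fun f x => u x * f x) ↔ u =ᵐ[μ] (0 : X → ℝ) :=
  multiplication_bounded_iff_zero_of_nonatomic_general μ hna Φ₁ Φ₂ Φ₃ hΦ u hu
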